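/- Let X be an Archimedean vector lattice, let x_1,…,x_m ∈ X for some m ∈ ℕ, set e = ⋁_{j=1}^m |x_j| ∈ X₊, and suppose Φ : ℋ_m → X is a lattice homomorphism with Φ(π_k) = x_k for each k = 1,…,m. Then the image of Φ is contained in the order ideal I_e, and ‖Φ(h)‖_e ≤ ‖h‖_{ℋ_m} for every h ∈ ℋ_m. -/
import Mathlib


/-- A function `h : ℝ^m → ℝ` belongs to `ℋ_m` iff it is continuous and positively
homogeneous. -/
def IsPHC {m : ℕ} (h : (Fin m → ℝ) → ℝ) : Prop :=
  Continuous h ∧ ∀ (c : ℝ), 0 ≤ c → ∀ t : Fin m → ℝ, h (c • t) = c * h t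

/-- The norm `‖h‖_{ℋ_m} = sup { |h(t)| : max_k |t_k| ≤ 1 }`. -/
noncomputable def HNorm {m : ℕ} (h : (Fin m → ℝ) → ℝ) : ℝ :=
  sSup ((fun t => |h t|) '' { t : Fin m → ℝ | ∀ k, |t k| ≤ 1 })

/-- Membership in the order ideal `I_e` generated by `e`. -/
def memIdeal {X : Type*} [Lattice X] [AddCommGroup X] [Module ℝ X] (e a : X) : Prop :=
  ∃ c : ℝ, 0 ≤ c ∧ |a| ≤ c • e

/-- The seminorm `‖a‖_e = inf { c ∈ [0,∞) : |a| ≤ c • e }` on `I_e`. -/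
noncomputable def eNorm {X : Type*} [Lattice X] [AddCommGroup X] [Module ℝ X] (e a : X) : ℝ :=
  sInf { c : ℝ | 0 ≤ c ∧ |a| ≤ c • e }

/-- Let `X` be an Archimedean vector lattice, `x_0, …, x_m ∈ X`,
`e = ⋁_j |x_j|`, and let `Φ : ℋ_m → X` be a lattice homomorphism with `Φ(π_k) = x_k`.
Then the image of `Φ` is contained in `I_e` and `‖Φ(h)‖_e ≤ ‖h‖_{ℋ_m}` for all `h ∈ ℋ_m`. -/
theorem function_calculus_image_in_ideal_and_eNorm_bound
    {X : Type*}
    [Lattice X] [AddCommGroup X] [Module ℝ X]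
    [CovariantClass X X (· + ·) (· ≤ ·)] [PosSMulMono ℝ X]
    (harchX : ∀ x y : X, (∀ n : ℕ, n • x ≤ y) → x ≤ 0)
    {m : ℕ} (x : Fin (m + 1) → X)
    (Φ : ((Fin (m + 1) → ℝ) → ℝ) → X)
    (hadd : ∀ h g, IsPHC h → IsPHC g → Φ (h + g) = Φ h + Φ g)
    (hsmul : ∀ (c : ℝ) h, IsPHC h → Φ (c • h) = c • Φ h)
    (hsup : ∀ h g, IsPHC h → IsPHC g → Φ (h ⊔ g) = Φ h ⊔ Φ g)
    (hproj : ∀ k : Fin (m + 1), Φ (fun t => t k) = x k)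
    (e : X) (he : e = Finset.univ.sup' ⟨0, Finset.mem_univ 0⟩ fun j => |x j|) :
    ∀ h : (Fin (m + 1) → ℝ) → ℝ, IsPHC h →
      memIdeal e (Φ h) ∧ eNorm e (Φ h) ≤ HNorm h := by
  -- closure properties of IsPHC
  have phc_sup : ∀ f g : (Fin (m+1) → ℝ) → ℝ, IsPHC f → IsPHC g → IsPHC (f ⊔ g) := by
    rintro f g ⟨fc, fh⟩ ⟨gc, gh⟩
    refine ⟨fc.max gc, ?_⟩
    intro c hc t
    show max (f (c • t)) (g (c • t)) = c * max (f t) (g t)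
    rw [fh c hc t, gh c hc t, mul_max_of_nonneg _ _ hc]
  have phc_smul : ∀ (a : ℝ) (f : (Fin (m+1) → ℝ) → ℝ), IsPHC f → IsPHC (a • f) := by
    rintro a f ⟨fc, fh⟩
    refine ⟨fc.const_smul a, ?_⟩
    intro c hc t
    show a * f (c • t) = c * (a * f t)
    rw [fh c hc t]; ring
  have phc_neg : ∀ f : (Fin (m+1) → ℝ) → ℝ, IsPHC f → IsPHC (-f) := by
    intro f hf
    have := phc_smul (-1) f hf
    rwa [neg_one_smul] at this
  have phc_proj : ∀ k : Fin (m+1), IsPHC (fun t : Fin (m+1) → ℝ => t k) := by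
    intro k
    refine ⟨continuous_apply k, ?_⟩
    intro c hc t
    simp [Pi.smul_apply, smul_eq_mul]
  have phc_abs : ∀ k : Fin (m+1), IsPHC (fun t : Fin (m+1) → ℝ => |t k|) := by
    intro k
    refine ⟨(continuous_apply k).abs, ?_⟩
    intro c hc t
    simp [Pi.smul_apply, smul_eq_mul, abs_mul, abs_of_nonneg hc]
  have Φ_neg : ∀ f : (Fin (m+1) → ℝ) → ℝ, IsPHC f → Φ (-f) = -Φ f := by
    intro f hf
    have := hsmul (-1) f hf
    rwa [neg_one_smul, neg_one_smul] at this
  have Φ_abs : ∀ k : Fin (m+1), Φ (fun t : Fin (m+1) → ℝ => |t k|) = |x k| := by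
    intro k
    have h1 : (fun t : Fin (m+1) → ℝ => |t k|)
        = (fun t : Fin (m+1) → ℝ => t k) ⊔ (-(fun t : Fin (m+1) → ℝ => t k)) := by
      funext t
      show |t k| = max (t k) (-(t k))
      exact abs_eq_max_neg
    rw [h1, hsup _ _ (phc_proj k) (phc_neg _ (phc_proj k)), Φ_neg _ (phc_proj k), hproj k]
    rfl
  -- monotonicity of Φ
  have hmono : ∀ f g : (Fin (m+1) → ℝ) → ℝ, IsPHC f → IsPHC g → (∀ t, f t ≤ g t) →
      Φ f ≤ Φ g := by
    intro f g hf hg hle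
    have hfg : f ⊔ g = g := by
      funext t
      exact sup_eq_right.mpr (hle t)
    calc Φ f ≤ Φ f ⊔ Φ g := le_sup_left
      _ = Φ (f ⊔ g) := (hsup f g hf hg).symm
      _ = Φ g := by rw [hfg]
  -- the gauge function g(t) = max_k |t_k|
  have key : ∀ (s : Finset (Fin (m+1))) (hs : s.Nonempty),
      IsPHC (fun t : Fin (m+1) → ℝ => s.sup' hs fun k => |t k|) ∧
      Φ (fun t : Fin (m+1) → ℝ => s.sup' hs fun k => |t k|) = s.sup' hs fun k => |x k| := by
    intro s hs
    induction hs using Finset.Nonempty.cons_induction with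
    | singleton a =>
      simp only [Finset.sup'_singleton]
      exact ⟨phc_abs a, Φ_abs a⟩
    | cons a s h hs ih =>
      simp only [Finset.sup'_cons hs]
      have heq : (fun t : Fin (m+1) → ℝ => |t a| ⊔ s.sup' hs fun k => |t k|)
          = (fun t : Fin (m+1) → ℝ => |t a|) ⊔ (fun t : Fin (m+1) → ℝ => s.sup' hs fun k => |t k|) := rfl
      rw [heq]
      refine ⟨phc_sup _ _ (phc_abs a) ih.1, ?_⟩
      rw [hsup _ _ (phc_abs a) ih.1, Φ_abs a, ih.2]
  set g : (Fin (m+1) → ℝ) → ℝ :=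
    fun t => Finset.univ.sup' ⟨0, Finset.mem_univ 0⟩ fun k => |t k| with hg
  obtain ⟨phc_g, Φg⟩ := key Finset.univ ⟨0, Finset.mem_univ 0⟩
  have Φg_e : Φ g = e := by rw [he]; exact Φg
  have g_nonneg : ∀ t, 0 ≤ g t := fun t =>
    le_trans (abs_nonneg (t 0)) (Finset.le_sup' (fun k => |t k|) (Finset.mem_univ 0))
  -- main argument
  intro h hh
  obtain ⟨hc, hhom⟩ := hh
  have h0 : h 0 = 0 := by
    have := hhom 0 le_rfl 0
    simpa using this
  set M := HNorm h with hM
  -- the cube is compact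
  have hcube : {t : Fin (m+1) → ℝ | ∀ k, |t k| ≤ 1}
      = Set.pi Set.univ (fun _ : Fin (m+1) => Set.Icc (-1 : ℝ) 1) := by
    ext t
    simp [abs_le, Set.mem_pi, Pi.le_def, forall_and]
  have hcompact : IsCompact ((fun t => |h t|) '' {t : Fin (m+1) → ℝ | ∀ k, |t k| ≤ 1}) := by
    rw [hcube]
    exact (isCompact_univ_pi fun _ => isCompact_Icc).image hc.abs
  have hbdd : BddAbove ((fun t => |h t|) '' {t : Fin (m+1) → ℝ | ∀ k, |t k| ≤ 1}) :=
    hcompact.bddAbove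
  have hmem0 : (0 : ℝ) ∈ (fun t => |h t|) '' {t : Fin (m+1) → ℝ | ∀ k, |t k| ≤ 1} := by
    refine ⟨0, fun k => by simp, by simp [h0]⟩
  have hM0 : 0 ≤ M := le_csSup hbdd hmem0
  -- pointwise bound |h t| ≤ M * g t
  have hpt : ∀ t, |h t| ≤ M * g t := by
    intro t
    rcases eq_or_lt_of_le (g_nonneg t) with h0g | hgt
    · have ht0 : t = 0 := by
        funext k
        have hk : |t k| ≤ g t := Finset.le_sup' (fun k => |t k|) (Finset.mem_univ k)
        rw [← h0g] at hk
        simpa using abs_nonpos_iff.mp hk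
      have h1 : |h t| = 0 := by rw [ht0, h0, abs_zero]
      rw [h1, ← h0g, mul_zero]
    · set s := g t with hs
      have hu : ∀ k, |(s⁻¹ • t) k| ≤ 1 := by
        intro k
        have hk : |t k| ≤ s := Finset.le_sup' (fun k => |t k|) (Finset.mem_univ k)
        have : |s⁻¹ * t k| = s⁻¹ * |t k| := by
          rw [abs_mul, abs_of_nonneg (inv_nonneg.mpr hgt.le)]
        rw [Pi.smul_apply, smul_eq_mul, this]
        calc s⁻¹ * |t k| ≤ s⁻¹ * s := by
              exact mul_le_mul_of_nonneg_left hk (inv_nonneg.mpr hgt.le)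
          _ = 1 := inv_mul_cancel₀ hgt.ne'
      have humem : |h (s⁻¹ • t)| ≤ M :=
        le_csSup hbdd ⟨s⁻¹ • t, hu, rfl⟩
      have hts : h t = s * h (s⁻¹ • t) := by
        conv_lhs => rw [← smul_inv_smul₀ hgt.ne' t]
        exact hhom s hgt.le _
      rw [hts, abs_mul, abs_of_nonneg hgt.le, mul_comm M s]
      exact mul_le_mul_of_nonneg_left humem hgt.le
  -- |Φ h| ≤ M • e
  have habs : |Φ h| ≤ M • e := by
    have h1 : Φ (h ⊔ -h) ≤ Φ (M • g) := by
      apply hmono _ _ (phc_sup _ _ ⟨hc, hhom⟩ (phc_neg _ ⟨hc, hhom⟩)) (phc_smul M g phc_g)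
      intro t
      show max (h t) (-(h t)) ≤ M * g t
      rw [← abs_eq_max_neg]
      exact hpt t
    rw [hsup _ _ ⟨hc, hhom⟩ (phc_neg _ ⟨hc, hhom⟩), Φ_neg _ ⟨hc, hhom⟩,
      hsmul M g phc_g, Φg_e] at h1
    exact h1
  refine ⟨⟨M, hM0, habs⟩, ?_⟩
  exact csInf_le ⟨0, fun c hc => hc.1⟩ ⟨hM0, habs⟩
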